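/- Every vector field of the form S = a₁X₁ + a₂X₂ + a₃X₃ + a₄X₄ + a₅(X₅ − X₆), with constants a₁,…,a₅ ∈ ℝ, is a symmetry of the rule-B rank-2 distribution preserving the area function: (i) the directional derivative of F along S vanishes identically, DF(m)(S(m)) = 0 for all m ∈ ℝ⁶; and (ii) for every m ∈ ℝ⁶, both [S, Z₁−Z₂](m) ∧ (Z₁−Z₂)(m) ∧ (Z₃−Z₁)(m) = 0 and [S, Z₃−Z₁](m) ∧ (Z₁−Z₂)(m) ∧ (Z₃−Z₁)(m) = 0 in the exterior algebra of ℝ⁶. -/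

import Mathlib

def xc (i : Fin 3) : Fin 6 := ⟨2 * i.val, by have := i.isLt; omega⟩

def yc (i : Fin 3) : Fin 6 := ⟨2 * i.val + 1, by have := i.isLt; omega⟩

noncomputable def lieBracket (V W : (Fin 6 → ℝ) → (Fin 6 → ℝ)) :
    (Fin 6 → ℝ) → (Fin 6 → ℝ) :=
  fun m => fderiv ℝ W m (V m) - fderiv ℝ V m (W m)

/-- Rule-B vector fields. -/
def ZB (i : Fin 3) (m : Fin 6 → ℝ) : Fin 6 → ℝ := fun j =>
  if j = xc i then m (xc (i + 1)) - m (xc (i + 2))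
  else if j = yc i then m (yc (i + 1)) - m (yc (i + 2))
  else 0

/-- A constant multiple of the signed area. -/
def F (m : Fin 6 → ℝ) : ℝ :=
  ∑ i : Fin 3, (m (yc i) * m (xc (i + 1)) - m (xc i) * m (yc (i + 1)))

/-- The symmetry fields `X₁,…,X₆` in coordinates `m = (x₁,y₁,x₂,y₂,x₃,y₃)`. -/
def X1 : (Fin 6 → ℝ) → (Fin 6 → ℝ) := fun _ => ![1, 0, 1, 0, 1, 0]
def X2 : (Fin 6 → ℝ) → (Fin 6 → ℝ) := fun _ => ![0, 1, 0, 1, 0, 1]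
def X3 : (Fin 6 → ℝ) → (Fin 6 → ℝ) := fun m => ![m 1, 0, m 3, 0, m 5, 0]
def X4 : (Fin 6 → ℝ) → (Fin 6 → ℝ) := fun m => ![0, m 0, 0, m 2, 0, m 4]
def X5 : (Fin 6 → ℝ) → (Fin 6 → ℝ) := fun m => ![m 0, 0, m 2, 0, m 4, 0]
def X6 : (Fin 6 → ℝ) → (Fin 6 → ℝ) := fun m => ![0, m 1, 0, m 3, 0, m 5]

/-!
In the coordinates `ℝ⁶ = (ℝ²)³` the field `S` is affine: it translates all three vertices by
`(a₁, a₂)` and applies the trace-free matrix `A = !![a₅, a₃; a₄, -a₅]` to each of them, i.e. its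
linear part is `1 ⊗ A`. Each `Zᵢ` is the linear field `Kᵢ ⊗ 1`, where the vertex-mixing matrix `Kᵢ`
has zero row sums. Hence `Kᵢ ⊗ 1` commutes with `1 ⊗ A` and kills uniform translations, so
`[S, Zᵢ - Zⱼ] = 0` and the wedge conditions hold. The area `F` is unchanged by uniform
translations, and its derivative along `1 ⊗ A` is `tr A • F = 0`.
-/

open Matrix
open scoped Kronecker

theorem Matrix.sub_kronecker {l m n p α : Type*} [Ring α] (A₁ A₂ : Matrix l m α)
    (B : Matrix n p α) : (A₁ - A₂) ⊗ₖ B = A₁ ⊗ₖ B - A₂ ⊗ₖ B := by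
  ext; simp [sub_mul]

abbrev pointCoord : Fin 3 × Fin 2 ≃ Fin 6 := finProdFinEquiv

@[simp] lemma pointCoord_zero (i : Fin 3) : pointCoord (i, 0) = xc i := by
  ext; simp [xc, finProdFinEquiv]

@[simp] lemma pointCoord_one (i : Fin 3) : pointCoord (i, 1) = yc i := by
  ext; simp [yc, finProdFinEquiv]; ring

lemma ext_xc_yc {v w : Fin 6 → ℝ} (hx : ∀ i, v (xc i) = w (xc i))
    (hy : ∀ i, v (yc i) = w (yc i)) : v = w := by
  funext j
  obtain ⟨⟨i, k⟩, rfl⟩ := pointCoord.surjective j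
  match k with
  | 0 => simpa using hx i
  | 1 => simpa using hy i

/-- The linear vector field sending the vertices `pᵢ` to `∑ⱼ K i j • A pⱼ`. -/
noncomputable def kronField (K : Matrix (Fin 3) (Fin 3) ℝ) (A : Matrix (Fin 2) (Fin 2) ℝ) :
    (Fin 6 → ℝ) →L[ℝ] (Fin 6 → ℝ) :=
  LinearMap.toContinuousLinearMap (toLin' (reindex pointCoord pointCoord (K ⊗ₖ A)))

section kronField

variable (K K' : Matrix (Fin 3) (Fin 3) ℝ) (A A' : Matrix (Fin 2) (Fin 2) ℝ) (v : Fin 6 → ℝ)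

lemma kronField_apply : kronField K A v = reindex pointCoord pointCoord (K ⊗ₖ A) *ᵥ v := rfl

lemma kronField_comp_pointCoord :
    kronField K A v ∘ pointCoord = (K ⊗ₖ A) *ᵥ (v ∘ pointCoord) := by
  rw [kronField_apply, reindex_apply, submatrix_mulVec_equiv]
  ext; simp

lemma kronField_apply_pointCoord (i : Fin 3) (k : Fin 2) :
    kronField K A v (pointCoord (i, k)) = ∑ j, K i j * (A k 0 * v (xc j) + A k 1 * v (yc j)) := by
  rw [← Function.comp_apply (f := kronField K A v), kronField_comp_pointCoord]
  simp [mulVec, dotProduct, Fintype.sum_prod_type, Fin.sum_univ_two, mul_add, mul_assoc]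

lemma kronField_apply_xc (i : Fin 3) :
    kronField K A v (xc i) = ∑ j, K i j * (A 0 0 * v (xc j) + A 0 1 * v (yc j)) := by
  rw [← pointCoord_zero, kronField_apply_pointCoord]

lemma kronField_apply_yc (i : Fin 3) :
    kronField K A v (yc i) = ∑ j, K i j * (A 1 0 * v (xc j) + A 1 1 * v (yc j)) := by
  rw [← pointCoord_one, kronField_apply_pointCoord]

lemma kronField_one_left_apply_xc (i : Fin 3) :
    kronField 1 A v (xc i) = A 0 0 * v (xc i) + A 0 1 * v (yc i) := by
  simp [kronField_apply_xc, one_apply]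

lemma kronField_one_left_apply_yc (i : Fin 3) :
    kronField 1 A v (yc i) = A 1 0 * v (xc i) + A 1 1 * v (yc i) := by
  simp [kronField_apply_yc, one_apply]

lemma kronField_comp_kronField :
    (kronField K A).comp (kronField K' A') = kronField (K * K') (A * A') := by
  ext1 v
  simp only [ContinuousLinearMap.comp_apply, kronField_apply, mulVec_mulVec, reindex_apply,
    submatrix_mul_equiv, mul_kronecker_mul]

lemma kronField_sub_left : kronField (K - K') A = kronField K A - kronField K' A := by
  ext1 v
  simp only [_root_.sub_apply, kronField_apply, sub_kronecker, reindex_apply, submatrix_sub,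
    Pi.sub_apply, sub_mulVec]

end kronField

def uniformTranslation (a : Fin 2 → ℝ) (j : Fin 6) : ℝ := a (pointCoord.symm j).2

lemma uniformTranslation_xc (a : Fin 2 → ℝ) (i : Fin 3) : uniformTranslation a (xc i) = a 0 := by
  simp [uniformTranslation, ← pointCoord_zero]

lemma uniformTranslation_yc (a : Fin 2 → ℝ) (i : Fin 3) : uniformTranslation a (yc i) = a 1 := by
  simp [uniformTranslation, ← pointCoord_one]

lemma kronField_uniformTranslation {K : Matrix (Fin 3) (Fin 3) ℝ} (hK : K *ᵥ 1 = 0)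
    (A : Matrix (Fin 2) (Fin 2) ℝ) (a : Fin 2 → ℝ) :
    kronField K A (uniformTranslation a) = 0 := by
  have hrow : ∀ i, ∑ j, K i j = 0 := fun i => by simpa [mulVec, dotProduct] using congrFun hK i
  have hcomp : kronField K A (uniformTranslation a) ∘ pointCoord = 0 := by
    rw [kronField_comp_pointCoord]
    ext ⟨i, k⟩
    simp [uniformTranslation, mulVec, dotProduct,
      Fintype.sum_prod_type, mul_assoc, ← Finset.mul_sum, ← Finset.sum_mul, hrow]
  funext j
  obtain ⟨p, rfl⟩ := pointCoord.surjective j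
  exact congrFun hcomp p

def ruleBMatrix (i : Fin 3) : Matrix (Fin 3) (Fin 3) ℝ := single i (i + 1) 1 - single i (i + 2) 1

lemma ruleBMatrix_mulVec_one (i : Fin 3) : ruleBMatrix i *ᵥ 1 = 0 := by
  simp [ruleBMatrix, sub_mulVec, single_mulVec]

lemma ZB_eq_kronField (i : Fin 3) : ZB i = kronField (ruleBMatrix i) 1 := by
  funext m
  refine ext_xc_yc (fun r => ?_) (fun r => ?_) <;>
  · simp only [kronField_apply_xc, kronField_apply_yc]
    fin_cases i <;> fin_cases r <;>
      simp [ZB, ruleBMatrix, xc, yc, Fin.sum_univ_three, single_apply, Fin.ext_iff] <;> ring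

lemma ruleB_symmetry_eq (a₁ a₂ a₃ a₄ a₅ : ℝ) (m : Fin 6 → ℝ) :
    a₁ • X1 m + a₂ • X2 m + a₃ • X3 m + a₄ • X4 m + a₅ • (X5 m - X6 m) =
      uniformTranslation ![a₁, a₂] + kronField 1 !![a₅, a₃; a₄, -a₅] m := by
  refine ext_xc_yc (fun i => ?_) (fun i => ?_) <;>
  · simp only [Pi.add_apply, uniformTranslation_xc, uniformTranslation_yc,
      kronField_one_left_apply_xc, kronField_one_left_apply_yc]
    fin_cases i <;> simp [X1, X2, X3, X4, X5, X6, xc, yc] <;> ring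

lemma lieBracket_const_add_clm (c : Fin 6 → ℝ) (L U : (Fin 6 → ℝ) →L[ℝ] (Fin 6 → ℝ))
    (m : Fin 6 → ℝ) : lieBracket (fun v => c + L v) U m = U c + U (L m) - L (U m) := by
  have hV : HasFDerivAt (fun v => c + L v) L m := L.hasFDerivAt.const_add c
  simp [lieBracket, hV.fderiv, U.fderiv, map_add]

lemma lieBracket_uniformTranslation_add_kronField {K : Matrix (Fin 3) (Fin 3) ℝ}
    (hK : K *ᵥ 1 = 0) (a : Fin 2 → ℝ) (A : Matrix (Fin 2) (Fin 2) ℝ) :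
    lieBracket (fun v => uniformTranslation a + kronField 1 A v) (kronField K 1) = 0 := by
  have hcomm : (kronField K 1).comp (kronField 1 A) = (kronField 1 A).comp (kronField K 1) := by
    simp only [kronField_comp_kronField, Matrix.mul_one, Matrix.one_mul]
  funext m
  rw [lieBracket_const_add_clm, kronField_uniformTranslation hK, ← ContinuousLinearMap.comp_apply,
    hcomm, ContinuousLinearMap.comp_apply, zero_add, sub_self, Pi.zero_apply]

lemma fderiv_F_apply (m v : Fin 6 → ℝ) :
    fderiv ℝ F m v = ∑ i : Fin 3, (m (yc i) * v (xc (i + 1)) + m (xc (i + 1)) * v (yc i) -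
      (m (xc i) * v (yc (i + 1)) + m (yc (i + 1)) * v (xc i))) := by
  have h : ∀ j, HasFDerivAt (fun w : Fin 6 → ℝ => w j)
      (ContinuousLinearMap.proj (R := ℝ) (φ := fun _ : Fin 6 => ℝ) j) m :=
    fun j => hasFDerivAt_apply j m
  have hF := HasFDerivAt.sum (u := Finset.univ) fun i _ =>
    ((h (yc i)).mul (h (xc (i + 1)))).sub ((h (xc i)).mul (h (yc (i + 1))))
  simp [HasFDerivAt.fderiv (f := F) hF, Finset.sum_sub_distrib]

lemma fderiv_F_uniformTranslation_add_kronField (a : Fin 2 → ℝ) {A : Matrix (Fin 2) (Fin 2) ℝ}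
    (hA : A.trace = 0) (m : Fin 6 → ℝ) :
    fderiv ℝ F m (uniformTranslation a + kronField 1 A m) = 0 := by
  have hA' : A 1 1 = -A 0 0 := by rw [trace_fin_two] at hA; linarith
  simp only [fderiv_F_apply, Pi.add_apply, uniformTranslation_xc, uniformTranslation_yc,
    kronField_one_left_apply_xc, kronField_one_left_apply_yc, hA']
  simp only [Fin.sum_univ_three, Fin.isValue, Fin.reduceAdd]
  ring

open ExteriorAlgebra in
theorem ruleB_affine_symmetries (a₁ a₂ a₃ a₄ a₅ : ℝ)
    (S : (Fin 6 → ℝ) → (Fin 6 → ℝ))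
    (hS : S = fun m => a₁ • X1 m + a₂ • X2 m + a₃ • X3 m + a₄ • X4 m +
      a₅ • (X5 m - X6 m)) :
    (∀ m : Fin 6 → ℝ, fderiv ℝ F m (S m) = 0) ∧
    (∀ m : Fin 6 → ℝ,
      ι ℝ (lieBracket S (ZB 0 - ZB 1) m) * ι ℝ ((ZB 0 - ZB 1) m) *
        ι ℝ ((ZB 2 - ZB 0) m) = 0 ∧
      ι ℝ (lieBracket S (ZB 2 - ZB 0) m) * ι ℝ ((ZB 0 - ZB 1) m) *
        ι ℝ ((ZB 2 - ZB 0) m) = 0) := by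
  have hS' : S = fun m => uniformTranslation ![a₁, a₂] + kronField 1 !![a₅, a₃; a₄, -a₅] m :=
    hS.trans (funext (ruleB_symmetry_eq a₁ a₂ a₃ a₄ a₅))
  have htrace : (!![a₅, a₃; a₄, -a₅] : Matrix (Fin 2) (Fin 2) ℝ).trace = 0 := by
    simp [trace_fin_two]
  have hbracket : ∀ i j, lieBracket S (ZB i - ZB j) = 0 := fun i j => by
    rw [hS', ZB_eq_kronField, ZB_eq_kronField, ← FunLike.coe_sub, ← kronField_sub_left]
    refine lieBracket_uniformTranslation_add_kronField ?_ _ _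
    rw [sub_mulVec, ruleBMatrix_mulVec_one, ruleBMatrix_mulVec_one, sub_self]
  refine ⟨fun m => hS' ▸ fderiv_F_uniformTranslation_add_kronField _ htrace m, fun m => ?_⟩
  simp [hbracket]
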